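/- For the 2-layer cascade with given positive rate constants k₁,…,k₁₂, a positive vector x ∈ ℝ^{10}_{>0} is a steady state if and only if it satisfies the six binomial equations k₁x₁x₅ = (k₂+k₃)x₇, k₄x₂x₆ = (k₅+k₆)x₉, k₇x₂x₃ = (k₈+k₉)x₈, k₁₀x₄x₆ = (k₁₁+k₁₂)x₁₀, k₃x₇ = k₆x₉, k₉x₈ = k₁₂x₁₀. -/
import Mathlib


/-- The 10 × 12 stoichiometric matrix of the 2-layer cascade of Example 2.1. -/
def cascadeN : Matrix (Fin 10) (Fin 12) ℝ :=
  !![-1,1,0,0,0,1,0,0,0,0,0,0;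
     0,0,1,-1,1,0,-1,1,1,0,0,0;
     0,0,0,0,0,0,-1,1,0,0,0,1;
     0,0,0,0,0,0,0,0,1,-1,1,0;
     -1,1,1,0,0,0,0,0,0,0,0,0;
     0,0,0,-1,1,1,0,0,0,-1,1,1;
     1,-1,-1,0,0,0,0,0,0,0,0,0;
     0,0,0,0,0,0,1,-1,-1,0,0,0;
     0,0,0,1,-1,-1,0,0,0,0,0,0;
     0,0,0,0,0,0,0,0,0,1,-1,-1]

/-- The vector of educt complex monomials of the 2-layer cascade:
`φ(x) = (x₁x₅, x₇, x₇, x₂x₆, x₉, x₉, x₂x₃, x₈, x₈, x₄x₆, x₁₀, x₁₀)`. -/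
def cascadePhi (x : Fin 10 → ℝ) : Fin 12 → ℝ :=
  ![x 0 * x 4, x 6, x 6, x 1 * x 5, x 8, x 8, x 1 * x 2, x 7, x 7,
    x 3 * x 5, x 9, x 9]

/-- The mass-action rate functions `f = N diag(k) φ(x)` of the 2-layer
cascade. -/
def cascadef (k : Fin 12 → ℝ) (x : Fin 10 → ℝ) : Fin 10 → ℝ :=
  cascadeN.mulVec (fun j => k j * cascadePhi x j)

set_option maxHeartbeats 2000000 in
/-- For the 2-layer cascade with positive rate constants, a positive vector
is a steady state iff it satisfies the six binomial equations. -/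
theorem cascade_toric_steady_states (k : Fin 12 → ℝ) (hk : ∀ i, 0 < k i)
    (x : Fin 10 → ℝ) (hx : ∀ i, 0 < x i) :
    (∀ j, cascadef k x j = 0) ↔
      (k 0 * x 0 * x 4 = (k 1 + k 2) * x 6 ∧
       k 3 * x 1 * x 5 = (k 4 + k 5) * x 8 ∧
       k 6 * x 1 * x 2 = (k 7 + k 8) * x 7 ∧
       k 9 * x 3 * x 5 = (k 10 + k 11) * x 9 ∧
       k 2 * x 6 = k 5 * x 8 ∧
       k 8 * x 7 = k 11 * x 9) := by
  constructor
  · intro h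
    simp only [cascadef, cascadeN, cascadePhi, Matrix.mulVec, dotProduct,
      Fin.sum_univ_succ, Fin.forall_fin_succ, Fin.sum_univ_zero,
      Matrix.cons_val_zero, Matrix.cons_val_succ, Matrix.cons_val_one, Matrix.head_cons,
      Matrix.of_apply, Matrix.cons_val', Matrix.empty_val', Matrix.cons_val_fin_one,
      Matrix.head_fin_const, neg_mul, one_mul, zero_mul, mul_zero, add_zero, zero_add, neg_neg] at h
    obtain ⟨h0, h1, h2, h3, h4, h5, h6, h7, h8, h9, -⟩ := h
    have H0 : -(k 0 * (x 0 * x 4)) + (k 1 * x 6 + k 5 * x 8) = 0 := h0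
    have H1 : k 2 * x 6 + (-(k 3 * (x 1 * x 5)) + (k 4 * x 8 + (-(k 6 * (x 1 * x 2)) + (k 7 * x 7 + k 8 * x 7)))) = 0 := h1
    have H2 : -(k 6 * (x 1 * x 2)) + (k 7 * x 7 + k 11 * x 9) = 0 := h2
    have H3 : k 8 * x 7 + (-(k 9 * (x 3 * x 5)) + k 10 * x 9) = 0 := h3
    have H4 : -(k 0 * (x 0 * x 4)) + (k 1 * x 6 + k 2 * x 6) = 0 := h4
    have H5 : -(k 3 * (x 1 * x 5)) + (k 4 * x 8 + (k 5 * x 8 + (-(k 9 * (x 3 * x 5)) + (k 10 * x 9 + k 11 * x 9)))) = 0 := h5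
    have H6 : k 0 * (x 0 * x 4) + (-(k 1 * x 6) + -(k 2 * x 6)) = 0 := h6
    have H7 : k 6 * (x 1 * x 2) + (-(k 7 * x 7) + -(k 8 * x 7)) = 0 := h7
    have H8 : k 3 * (x 1 * x 5) + (-(k 4 * x 8) + -(k 5 * x 8)) = 0 := h8
    have H9 : k 9 * (x 3 * x 5) + (-(k 10 * x 9) + -(k 11 * x 9)) = 0 := h9
    clear h0 h1 h2 h3 h4 h5 h6 h7 h8 h9
    refine ⟨by nlinarith, by nlinarith, by nlinarith, by nlinarith, by nlinarith, by nlinarith⟩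
  · rintro ⟨e1, e2, e3, e4, e5, e6⟩
    simp only [cascadef, cascadeN, cascadePhi, Matrix.mulVec, dotProduct,
      Fin.sum_univ_succ, Fin.forall_fin_succ, Fin.sum_univ_zero,
      Matrix.cons_val_zero, Matrix.cons_val_succ, Matrix.cons_val_one, Matrix.head_cons,
      Matrix.of_apply, Matrix.cons_val', Matrix.empty_val', Matrix.cons_val_fin_one,
      Matrix.head_fin_const, neg_mul, one_mul, zero_mul, mul_zero, add_zero, zero_add, neg_neg]
    refine ⟨?_, ?_, ?_, ?_, ?_, ?_, ?_, ?_, ?_, ?_, fun i => i.elim0⟩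
    · exact ((by nlinarith : -(k 0 * (x 0 * x 4)) + (k 1 * x 6 + k 5 * x 8) = 0))
    · exact ((by nlinarith : k 2 * x 6 + (-(k 3 * (x 1 * x 5)) + (k 4 * x 8 + (-(k 6 * (x 1 * x 2)) + (k 7 * x 7 + k 8 * x 7)))) = 0))
    · exact ((by nlinarith : -(k 6 * (x 1 * x 2)) + (k 7 * x 7 + k 11 * x 9) = 0))
    · exact ((by nlinarith : k 8 * x 7 + (-(k 9 * (x 3 * x 5)) + k 10 * x 9) = 0))
    · exact ((by nlinarith : -(k 0 * (x 0 * x 4)) + (k 1 * x 6 + k 2 * x 6) = 0))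
    · exact ((by nlinarith : -(k 3 * (x 1 * x 5)) + (k 4 * x 8 + (k 5 * x 8 + (-(k 9 * (x 3 * x 5)) + (k 10 * x 9 + k 11 * x 9)))) = 0))
    · exact ((by nlinarith : k 0 * (x 0 * x 4) + (-(k 1 * x 6) + -(k 2 * x 6)) = 0))
    · exact ((by nlinarith : k 6 * (x 1 * x 2) + (-(k 7 * x 7) + -(k 8 * x 7)) = 0))
    · exact ((by nlinarith : k 3 * (x 1 * x 5) + (-(k 4 * x 8) + -(k 5 * x 8)) = 0))
    · exact ((by nlinarith : k 9 * (x 3 * x 5) + (-(k 10 * x 9) + -(k 11 * x 9)) = 0))
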